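/- Assume moreover that β satisfies β(γ1, γ2)·β(γ1, γ3) = β(γ1, γ2+γ3) for all γ1, γ2, γ3 ∈ Γ. Then for a (G_Γ, β, γ0)-vertex algebra V (as in the context): (i) Y_0(u, Y_{−2}(v, w)) ∈ C₂(V) and Y_0(Y_{−2}(u, v), w) ∈ C₂(V) for all u, v, w ∈ V; (ii) Y_0(u, v) + β(γ1, γ2)·Y_0(v, u) ∈ C₂(V) for all u ∈ V_{γ1}, v ∈ V_{γ2}; (iii) for all u ∈ V_{γ1}, v ∈ V_{γ2}, w ∈ V_{γ3}: Y_0(Y_0(u, v), w) + β(γ1,γ2)β(γ1,γ3)·Y_0(Y_0(v, w), u) + β(γ1,γ2)β(γ1,γ3)β(γ2,γ3)β(γ2,γ1)·Y_0(Y_0(w, u), v) ∈ C₂(V); (iv) for all u ∈ V_{γ1}, v ∈ V_{γ2}, w ∈ V_{γ3}: Y_0(u, Y_{−1}(v, w)) − Y_{−1}(Y_0(u, v), w) + β(γ1,γ2)β(γ1,γ3)·Y_{−1}(v, Y_0(w, u)) ∈ C₂(V). Consequently R(V) = V/C₂(V), with product induced by Y_{−1}, unit the class of 𝟙, and bracket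 induced by Y_0, is a β-commutative (G_Γ, β)-Poisson algebra of degree 0. -/
import Mathlib


/-- The generalized binomial coefficient `binom(a, i) = a(a-1)⋯(a-i+1)/i!`
for `a : ℤ`, `i : ℕ`; it is an integer. -/
def zbinom (a : ℤ) (i : ℕ) : ℤ :=
  if 0 ≤ a then (a.toNat.choose i : ℤ)
  else (-1 : ℤ) ^ i * ((((i : ℤ) - a - 1).toNat).choose i : ℤ)

/-- A `(G_Γ, β, γ0)`-vertex algebra in component form, *without* the
derivation axiom (which is to be derived): a `Γ`-graded `k`-vector space `V`
(internal direct sum of the subspaces `Vg γ`), bilinear products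
`Y n : V → V → V` of degree `n • γ0`, and a vacuum vector `vac ∈ V_0`,
satisfying truncation, vacuum, creation and the `β`-Jacobi identity. -/
structure PreVA (k : Type*) [Field k] (Γ : Type*) [AddCommGroup Γ] [DecidableEq Γ]
    (γ0 : Γ) (β : Γ → Γ → k)
    (V : Type*) [AddCommGroup V] [Module k V] where
  Vg : Γ → Submodule k V
  internal : DirectSum.IsInternal Vg
  Y : ℤ → V →ₗ[k] V →ₗ[k] V
  vac : V
  vac_mem : vac ∈ Vg 0
  grading : ∀ (n : ℤ) (γ1 γ2 : Γ) (u v : V), u ∈ Vg γ1 → v ∈ Vg γ2 →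
      Y n u v ∈ Vg (γ1 + γ2 + n • γ0)
  truncation : ∀ u v : V, ∃ N : ℤ, ∀ n : ℤ, N ≤ n → Y n u v = 0
  vacuum_left : ∀ v : V, Y (-1) vac v = v
  vacuum_left' : ∀ n : ℤ, n ≠ -1 → ∀ v : V, Y n vac v = 0
  creation : ∀ v : V, Y (-1) v vac = v
  creation' : ∀ n : ℤ, 0 ≤ n → ∀ v : V, Y n v vac = 0
  jacobi : ∀ (l m n : ℤ) (γ1 γ2 : Γ) (u v w : V), u ∈ Vg γ1 → v ∈ Vg γ2 →
      (∑ᶠ i : ℕ, (((-1 : k) ^ i * (zbinom l i : k)) •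
          Y (m + l - (i : ℤ)) u (Y (n + (i : ℤ)) v w)))
        - ((-1 : k) ^ l * β γ1 γ2) •
            (∑ᶠ i : ℕ, (((-1 : k) ^ i * (zbinom l i : k)) •
              Y (n + l - (i : ℤ)) v (Y (m + (i : ℤ)) u w)))
        = ∑ᶠ i : ℕ, ((zbinom m i : k) •
            Y (m + n - (i : ℤ)) (Y (l + (i : ℤ)) u v) w)


/-- A `(G_Γ, β, γ0)`-vertex algebra in component form: a `PreVA` together
with the derivation properties of `D(v) = Y_{-2}(v, 𝟙)`, namely
`D(Y_n(u,v)) - Y_n(u, D v) = -n • Y_{n-1}(u,v)` and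
`Y_n(D u, v) = -n • Y_{n-1}(u,v)`. -/
structure VA (k : Type*) [Field k] (Γ : Type*) [AddCommGroup Γ] [DecidableEq Γ]
    (γ0 : Γ) (β : Γ → Γ → k)
    (V : Type*) [AddCommGroup V] [Module k V]
    extends PreVA k Γ γ0 β V where
  deriv1 : ∀ (n : ℤ) (u v : V),
      Y (-2) (Y n u v) vac - Y n u (Y (-2) v vac) = (-n) • Y (n - 1) u v
  deriv2 : ∀ (n : ℤ) (u v : V),
      Y n (Y (-2) u vac) v = (-n) • Y (n - 1) u v

/-- The subspace `C₂(V) = span_k { Y_{-2}(u, v) : u, v ∈ V }`. -/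
def C2 {k Γ V : Type*} [Field k] [AddCommGroup Γ] [DecidableEq Γ]
    [AddCommGroup V] [Module k V] {γ0 : Γ} {β : Γ → Γ → k}
    (A : VA k Γ γ0 β V) : Submodule k V :=
  Submodule.span k {x : V | ∃ u v : V, A.Y (-2) u v = x}


section AuxHelpers
open Function


lemma zbinom_zero_zero : zbinom 0 0 = 1 := by simp [zbinom]
lemma zbinom_zero_of_ne {i : ℕ} (hi : i ≠ 0) : zbinom 0 i = 0 := by
  simp [zbinom, Nat.choose_eq_zero_of_lt (Nat.pos_of_ne_zero hi)]
lemma zbinom_neg_one_zero : zbinom (-1) 0 = 1 := by simp [zbinom]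
lemma zbinom_one_zero : zbinom 1 0 = 1 := by simp [zbinom]
lemma zbinom_one_one : zbinom 1 1 = 1 := by norm_num [zbinom]
lemma zbinom_one_of_two_le {i : ℕ} (hi : 2 ≤ i) : zbinom 1 i = 0 := by
  have : (1:ℤ).toNat = 1 := rfl
  simp [zbinom, this, Nat.choose_eq_zero_of_lt (by omega : 1 < i)]

section
variable {k V : Type*} [Field k] [AddCommGroup V] [Module k V]

lemma finsum_mem_submodule (p : Submodule k V) (g : ℕ → V) (h : ∀ i, g i ∈ p) :
    (∑ᶠ i, g i) ∈ p := by
  by_cases hf : (Function.support g).Finite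
  · rw [finsum_eq_sum g hf]
    exact Submodule.sum_mem _ fun i _ => h i
  · rw [finsum_of_infinite_support hf]
    exact p.zero_mem

lemma finsum_sub_head_mem (p : Submodule k V) (g : ℕ → V)
    (hf : (Function.support g).Finite) (h : ∀ i, i ≠ 0 → g i ∈ p) :
    (∑ᶠ i, g i) - g 0 ∈ p := by
  classical
  have hsub : Function.support g ⊆ (insert 0 hf.toFinset : Finset ℕ) := by
    intro i hi
    simp only [Finset.coe_insert, Set.mem_insert_iff, Set.Finite.coe_toFinset]
    exact Or.inr hi
  rw [finsum_eq_finset_sum_of_support_subset g hsub]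
  rw [← Finset.sum_erase_add _ g (Finset.mem_insert_self 0 _)]
  have h2 : (∑ i ∈ (insert 0 hf.toFinset).erase 0, g i) ∈ p :=
    Submodule.sum_mem _ fun i hi => h i (Finset.ne_of_mem_erase hi)
  simpa using h2

lemma support_fin_of_bound (g : ℕ → V) (N : ℤ) (h : ∀ i : ℕ, N ≤ (i:ℤ) → g i = 0) :
    (Function.support g).Finite := by
  apply Set.Finite.subset (Set.finite_Iio N.toNat)
  intro i hi
  simp only [Set.mem_Iio]
  by_contra hlt
  exact hi (h i (by omega))

lemma finsum_smul_single (c : ℕ → k) (hc : ∀ i, i ≠ 0 → c i = 0) (g : ℕ → V) :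
    ∑ᶠ i, c i • g i = c 0 • g 0 :=
  finsum_eq_single _ 0 fun i hi => by rw [hc i hi, zero_smul]
end

section Core
set_option linter.unusedSectionVars false
variable {k Γ V : Type*} [Field k] [CharZero k] [AddCommGroup Γ]
    [DecidableEq Γ] [AddCommGroup V] [Module k V]
    {γ0 : Γ} {β : Γ → Γ → k} (A : VA k Γ γ0 β V)

lemma mem_C2 (u v : V) : A.Y (-2) u v ∈ C2 A :=
  Submodule.subset_span ⟨u, v, rfl⟩

lemma Ynat_low (i : ℕ) : ∀ u v : V, A.Y (-2 - (i:ℤ)) u v ∈ C2 A := by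
  induction i with
  | zero => intro u v; simpa using mem_C2 A u v
  | succ j ih =>
    intro u v
    have hm : A.Y (-2 - (j:ℤ)) (A.Y (-2) u A.vac) v ∈ C2 A := ih _ v
    rw [A.deriv2 (-2 - (j:ℤ)) u v,
      show -(-2 - (j:ℤ)) = 2 + (j:ℤ) by ring,
      show (-2 - (j:ℤ)) - 1 = -2 - ((j+1 : ℕ):ℤ) by push_cast; ring,
      ← Int.cast_smul_eq_zsmul k] at hm
    have hne : ((2 + (j:ℤ) : ℤ) : k) ≠ 0 :=
      Int.cast_ne_zero.mpr (by omega)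
    have h2 := (C2 A).smul_mem (((2 + (j:ℤ) : ℤ) : k))⁻¹ hm
    rwa [inv_smul_smul₀ hne] at h2

lemma Y_low {n : ℤ} (hn : n ≤ -2) (u v : V) : A.Y n u v ∈ C2 A := by
  obtain ⟨i, rfl⟩ : ∃ i : ℕ, n = -2 - (i:ℤ) := ⟨(-2 - n).toNat, by omega⟩
  exact Ynat_low A i u v

lemma hom_ext (p : Submodule k V) (f : V →ₗ[k] V)
    (h : ∀ (γ : Γ) (x : V), x ∈ A.Vg γ → f x ∈ p) (x : V) : f x ∈ p := by
  have htop : (⨆ γ, A.Vg γ) = ⊤ := A.internal.submodule_iSup_eq_top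
  have hle : (⊤ : Submodule k V) ≤ p.comap f := by
    rw [← htop]
    exact iSup_le fun γ x hx => Submodule.mem_comap.mpr (h γ x hx)
  exact hle trivial

lemma hom_ext2 (p : Submodule k V) (f : V →ₗ[k] V →ₗ[k] V)
    (h : ∀ (γ1 γ2 : Γ) (u v : V), u ∈ A.Vg γ1 → v ∈ A.Vg γ2 → f u v ∈ p)
    (u v : V) : f u v ∈ p := by
  have h1 : ∀ (γ1 : Γ) (u : V), u ∈ A.Vg γ1 → ∀ v, f u v ∈ p :=
    fun γ1 u hu v => hom_ext A p (f u) (fun γ2 v hv => h γ1 γ2 u v hu hv) v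
  exact hom_ext A p (f.flip v) (fun γ1 u hu => h1 γ1 u hu v) u

lemma map_C2 (f : V →ₗ[k] V) (h : ∀ u v : V, f (A.Y (-2) u v) ∈ C2 A) :
    ∀ c ∈ C2 A, f c ∈ C2 A := by
  intro c hc
  induction hc using Submodule.span_induction with
  | mem x hx => obtain ⟨u, v, rfl⟩ := hx; exact h u v
  | zero => simp
  | add x y hx hy ihx ihy => rw [map_add]; exact add_mem ihx ihy
  | smul a x hx ih => rw [map_smul]; exact Submodule.smul_mem _ _ ih

/-- Commutator formula (exact): from Jacobi with `l = 0, m = 0`. -/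
lemma commF (n : ℤ) (γ1 γ2 : Γ) (u v : V) (hu : u ∈ A.Vg γ1) (hv : v ∈ A.Vg γ2)
    (w : V) :
    A.Y 0 u (A.Y n v w) - β γ1 γ2 • A.Y n v (A.Y 0 u w)
      = A.Y n (A.Y 0 u v) w := by
  have J := A.jacobi 0 0 n γ1 γ2 u v w hu hv
  rw [finsum_smul_single (fun i => (-1:k)^i * (zbinom 0 i : k))
        (fun i hi => by show (-1:k)^i * (zbinom 0 i : k) = 0; rw [zbinom_zero_of_ne hi]; simp) _,
      finsum_smul_single (fun i => (-1:k)^i * (zbinom 0 i : k))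
        (fun i hi => by show (-1:k)^i * (zbinom 0 i : k) = 0; rw [zbinom_zero_of_ne hi]; simp) _,
      finsum_smul_single (fun i => (zbinom 0 i : k))
        (fun i hi => by show ((zbinom 0 i : ℤ) : k) = 0; rw [zbinom_zero_of_ne hi]; simp) _] at J
  simpa [zbinom_zero_zero] using J

end Core

section Jac
set_option linter.unusedSectionVars false
variable {k Γ V : Type*} [Field k] [CharZero k] [AddCommGroup Γ]
    [DecidableEq Γ] [AddCommGroup V] [Module k V]
    {γ0 : Γ} {β : Γ → Γ → k} (A : VA k Γ γ0 β V)

lemma grading0 (γ1 γ2 : Γ) (u v : V) (hu : u ∈ A.Vg γ1) (hv : v ∈ A.Vg γ2) :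
    A.Y 0 u v ∈ A.Vg (γ1 + γ2) := by
  simpa using A.grading 0 γ1 γ2 u v hu hv

/-- (i), first half, homogeneous case. -/
lemma Y0_C2_right_hom (γ1 γ2 : Γ) (u v : V) (hu : u ∈ A.Vg γ1) (hv : v ∈ A.Vg γ2)
    (w : V) : A.Y 0 u (A.Y (-2) v w) ∈ C2 A := by
  have h := commF A (-2) γ1 γ2 u v hu hv w
  rw [sub_eq_iff_eq_add] at h
  rw [h]
  exact add_mem (mem_C2 A _ _) (Submodule.smul_mem _ _ (mem_C2 A _ _))

/-- (i), second half, homogeneous case. -/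
lemma Y0_C2_left_hom (γ1 γ2 : Γ) (u v : V) (hu : u ∈ A.Vg γ1) (hv : v ∈ A.Vg γ2)
    (w : V) : A.Y 0 (A.Y (-2) u v) w ∈ C2 A := by
  have J := A.jacobi (-2) 0 0 γ1 γ2 u v w hu hv
  rw [finsum_smul_single (fun i => (zbinom 0 i : k))
      (fun i hi => by show ((zbinom 0 i : ℤ):k) = 0; rw [zbinom_zero_of_ne hi]; simp) _] at J
  norm_num [zbinom_zero_zero] at J
  rw [← J]
  exact sub_mem
    (finsum_mem_submodule _ _ fun i => Submodule.smul_mem _ _ (Y_low A (by omega) _ _))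
    (Submodule.smul_mem _ _
      (finsum_mem_submodule _ _ fun i => Submodule.smul_mem _ _ (Y_low A (by omega) _ _)))

/-- `Y_{-1}(u, Y_{-2}(v,w)) ∈ C₂`, homogeneous case. -/
lemma Ym1_C2_right_hom (γ1 γ2 : Γ) (u v : V) (hu : u ∈ A.Vg γ1) (hv : v ∈ A.Vg γ2)
    (w : V) : A.Y (-1) u (A.Y (-2) v w) ∈ C2 A := by
  have J := A.jacobi 0 (-1) (-2) γ1 γ2 u v w hu hv
  rw [finsum_smul_single (fun i => (-1:k)^i * (zbinom 0 i : k))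
        (fun i hi => by show (-1:k)^i * (zbinom 0 i : k) = 0; rw [zbinom_zero_of_ne hi]; simp) _,
      finsum_smul_single (fun i => (-1:k)^i * (zbinom 0 i : k))
        (fun i hi => by show (-1:k)^i * (zbinom 0 i : k) = 0; rw [zbinom_zero_of_ne hi]; simp) _] at J
  norm_num [zbinom_zero_zero] at J
  rw [sub_eq_iff_eq_add] at J
  rw [J]
  exact add_mem
    (finsum_mem_submodule _ _ fun i => Submodule.smul_mem _ _ (Y_low A (by omega) _ _))
    (Submodule.smul_mem _ _ (mem_C2 A _ _))

/-- `Y_{-1}(Y_{-2}(u,v), w) ∈ C₂`, homogeneous case. -/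
lemma Ym1_C2_left_hom (γ1 γ2 : Γ) (u v : V) (hu : u ∈ A.Vg γ1) (hv : v ∈ A.Vg γ2)
    (w : V) : A.Y (-1) (A.Y (-2) u v) w ∈ C2 A := by
  have J := A.jacobi (-2) (-1) 0 γ1 γ2 u v w hu hv
  have hR : (∑ᶠ i : ℕ, ((zbinom (-1) i : k) •
      A.Y (-1 + 0 - (i:ℤ)) (A.Y (-2 + (i:ℤ)) u v) w)) ∈ C2 A := by
    rw [← J]
    exact sub_mem
      (finsum_mem_submodule _ _ fun i => Submodule.smul_mem _ _ (Y_low A (by omega) _ _))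
      (Submodule.smul_mem _ _
        (finsum_mem_submodule _ _ fun i => Submodule.smul_mem _ _ (Y_low A (by omega) _ _)))
  obtain ⟨N, hN⟩ := A.truncation u v
  have hfin : (Function.support (fun i : ℕ => ((zbinom (-1) i : k) •
      A.Y (-1 + 0 - (i:ℤ)) (A.Y (-2 + (i:ℤ)) u v) w))).Finite := by
    refine support_fin_of_bound _ (N + 2) fun i hi => ?_
    rw [hN (-2 + (i:ℤ)) (by omega)]
    simp
  have h1 := finsum_sub_head_mem (C2 A) _ hfin
    (fun i hi => Submodule.smul_mem _ _ (Y_low A (by omega) _ _))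
  have h2 := sub_mem hR h1
  rw [sub_sub_cancel] at h2
  simpa [zbinom_neg_one_zero] using h2

/-- Associativity mod `C₂` for `Y₋₁`, homogeneous case. -/
lemma assoc_m1_hom (γ1 γ2 : Γ) (u v : V) (hu : u ∈ A.Vg γ1) (hv : v ∈ A.Vg γ2)
    (w : V) :
    A.Y (-1) u (A.Y (-1) v w) - A.Y (-1) (A.Y (-1) u v) w ∈ C2 A := by
  have J := A.jacobi (-1) 0 (-1) γ1 γ2 u v w hu hv
  have h3 : (∑ᶠ i : ℕ, ((zbinom 0 i : k) •
      A.Y (0 + -1 - (i:ℤ)) (A.Y (-1 + (i:ℤ)) u v) w)) = A.Y (-1) (A.Y (-1) u v) w := by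
    rw [finsum_smul_single (fun i => (zbinom 0 i : k))
      (fun i hi => by show ((zbinom 0 i : ℤ):k) = 0; rw [zbinom_zero_of_ne hi]; simp) _]
    norm_num [zbinom_zero_zero]
  rw [h3] at J
  obtain ⟨N, hN⟩ := A.truncation v w
  have hfin : (Function.support (fun i : ℕ => (((-1:k)^i * (zbinom (-1) i : k)) •
      A.Y (0 + -1 - (i:ℤ)) u (A.Y (-1 + (i:ℤ)) v w)))).Finite := by
    refine support_fin_of_bound _ (N + 1) fun i hi => ?_
    rw [hN (-1 + (i:ℤ)) (by omega)]
    simp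
  have h1 := finsum_sub_head_mem (C2 A) _ hfin
    (fun i hi => Submodule.smul_mem _ _ (Y_low A (by omega) _ _))
  have h2 : (∑ᶠ i : ℕ, (((-1:k)^i * (zbinom (-1) i : k)) •
      A.Y (-1 + -1 - (i:ℤ)) v (A.Y (0 + (i:ℤ)) u w))) ∈ C2 A :=
    finsum_mem_submodule _ _ fun i => Submodule.smul_mem _ _ (Y_low A (by omega) _ _)
  have h4 := sub_mem (Submodule.smul_mem (C2 A) ((-1:k)^(-1:ℤ) * β γ1 γ2) h2) h1
  convert h4 using 1
  rw [← J]
  norm_num [zbinom_neg_one_zero]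
  abel

/-- Skew-symmetry of `Y₀` mod `C₂`. -/
lemma skew (γ1 γ2 : Γ) (u v : V) (hu : u ∈ A.Vg γ1) (hv : v ∈ A.Vg γ2) :
    A.Y 0 u v + β γ1 γ2 • A.Y 0 v u ∈ C2 A := by
  have J := A.jacobi 1 (-1) (-1) γ1 γ2 u v A.vac hu hv
  have e1 : (∑ᶠ i : ℕ, (((-1:k)^i * (zbinom 1 i : k)) •
      A.Y (-1 + 1 - (i:ℤ)) u (A.Y (-1 + (i:ℤ)) v A.vac))) = A.Y 0 u v := by
    refine (finsum_eq_single _ 0 fun i hi => ?_).trans ?_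
    · by_cases h1 : i = 1
      · subst h1
        norm_num [A.creation' 0 le_rfl v]
      · simp [zbinom_one_of_two_le (show 2 ≤ i by omega)]
    · norm_num [zbinom_one_zero, A.creation]
  have e2 : (∑ᶠ i : ℕ, (((-1:k)^i * (zbinom 1 i : k)) •
      A.Y (-1 + 1 - (i:ℤ)) v (A.Y (-1 + (i:ℤ)) u A.vac))) = A.Y 0 v u := by
    refine (finsum_eq_single _ 0 fun i hi => ?_).trans ?_
    · by_cases h1 : i = 1
      · subst h1
        norm_num [A.creation' 0 le_rfl u]
      · simp [zbinom_one_of_two_le (show 2 ≤ i by omega)]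
    · norm_num [zbinom_one_zero, A.creation]
  rw [e1, e2] at J
  have h2 : A.Y 0 u v - ((-1:k)^(1:ℤ) * β γ1 γ2) • A.Y 0 v u ∈ C2 A := by
    rw [J]
    exact finsum_mem_submodule _ _ fun i => Submodule.smul_mem _ _ (Y_low A (by omega) _ _)
  simpa [sub_neg_eq_add] using h2

/-- Skew-symmetry of `Y₋₁` mod `C₂`. -/
lemma comm_m1 (γ1 γ2 : Γ) (u v : V) (hu : u ∈ A.Vg γ1) (hv : v ∈ A.Vg γ2) :
    A.Y (-1) u v - β γ1 γ2 • A.Y (-1) v u ∈ C2 A := by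
  have J := A.jacobi 0 (-1) (-1) γ1 γ2 u v A.vac hu hv
  rw [finsum_smul_single (fun i => (-1:k)^i * (zbinom 0 i : k))
        (fun i hi => by show (-1:k)^i * (zbinom 0 i : k) = 0; rw [zbinom_zero_of_ne hi]; simp) _,
      finsum_smul_single (fun i => (-1:k)^i * (zbinom 0 i : k))
        (fun i hi => by show (-1:k)^i * (zbinom 0 i : k) = 0; rw [zbinom_zero_of_ne hi]; simp) _] at J
  norm_num [zbinom_zero_zero, A.creation] at J
  rw [J]
  exact finsum_mem_submodule _ _ fun i => Submodule.smul_mem _ _ (Y_low A (by omega) _ _)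

end Jac

section Gen
set_option linter.unusedSectionVars false
variable {k Γ V : Type*} [Field k] [CharZero k] [AddCommGroup Γ]
    [DecidableEq Γ] [AddCommGroup V] [Module k V]
    {γ0 : Γ} {β : Γ → Γ → k} (A : VA k Γ γ0 β V)

lemma Y0_C2_right (u v w : V) : A.Y 0 u (A.Y (-2) v w) ∈ C2 A := by
  have := hom_ext2 A (C2 A) ((A.Y 0).compl₂ ((A.Y (-2)).flip w))
    (fun γ1 γ2 u v hu hv => by
      simpa using Y0_C2_right_hom A γ1 γ2 u v hu hv w) u v
  simpa using this

lemma Y0_C2_left (u v w : V) : A.Y 0 (A.Y (-2) u v) w ∈ C2 A := by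
  have := hom_ext2 A (C2 A) ((A.Y (-2)).compr₂ ((A.Y 0).flip w))
    (fun γ1 γ2 u v hu hv => by
      simpa using Y0_C2_left_hom A γ1 γ2 u v hu hv w) u v
  simpa using this

lemma Ym1_C2_right (u v w : V) : A.Y (-1) u (A.Y (-2) v w) ∈ C2 A := by
  have := hom_ext2 A (C2 A) ((A.Y (-1)).compl₂ ((A.Y (-2)).flip w))
    (fun γ1 γ2 u v hu hv => by
      simpa using Ym1_C2_right_hom A γ1 γ2 u v hu hv w) u v
  simpa using this

lemma Ym1_C2_left (u v w : V) : A.Y (-1) (A.Y (-2) u v) w ∈ C2 A := by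
  have := hom_ext2 A (C2 A) ((A.Y (-2)).compr₂ ((A.Y (-1)).flip w))
    (fun γ1 γ2 u v hu hv => by
      simpa using Ym1_C2_left_hom A γ1 γ2 u v hu hv w) u v
  simpa using this

lemma assoc_m1 (u v w : V) :
    A.Y (-1) u (A.Y (-1) v w) - A.Y (-1) (A.Y (-1) u v) w ∈ C2 A := by
  have := hom_ext2 A (C2 A)
    ((A.Y (-1)).compl₂ ((A.Y (-1)).flip w) - (A.Y (-1)).compr₂ ((A.Y (-1)).flip w))
    (fun γ1 γ2 u v hu hv => by
      simpa using assoc_m1_hom A γ1 γ2 u v hu hv w) u v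
  simpa using this

-- descent of `Y₀` and `Y₋₁` through `C₂`
lemma C2_Y0_right (u : V) {c : V} (hc : c ∈ C2 A) : A.Y 0 u c ∈ C2 A :=
  map_C2 A (A.Y 0 u) (fun v w => Y0_C2_right A u v w) c hc

lemma C2_Y0_left (w : V) {c : V} (hc : c ∈ C2 A) : A.Y 0 c w ∈ C2 A := by
  have := map_C2 A ((A.Y 0).flip w) (fun u v => by simpa using Y0_C2_left A u v w) c hc
  simpa using this

lemma C2_Ym1_right (u : V) {c : V} (hc : c ∈ C2 A) : A.Y (-1) u c ∈ C2 A :=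
  map_C2 A (A.Y (-1) u) (fun v w => Ym1_C2_right A u v w) c hc

lemma C2_Ym1_left (w : V) {c : V} (hc : c ∈ C2 A) : A.Y (-1) c w ∈ C2 A := by
  have := map_C2 A ((A.Y (-1)).flip w) (fun u v => by simpa using Ym1_C2_left A u v w) c hc
  simpa using this

end Gen

section Fin
set_option linter.unusedSectionVars false
variable {k Γ V : Type*} [Field k] [CharZero k] [AddCommGroup Γ]
    [DecidableEq Γ] [AddCommGroup V] [Module k V]
    {γ0 : Γ} {β : Γ → Γ → k} (A : VA k Γ γ0 β V)

/-- Part (iii). -/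
lemma part3 (hβmul : ∀ γ1 γ2 γ3 : Γ, β γ1 γ2 * β γ1 γ3 = β γ1 (γ2 + γ3))
    (γ1 γ2 γ3 : Γ) (u v w : V)
    (hu : u ∈ A.Vg γ1) (hv : v ∈ A.Vg γ2) (hw : w ∈ A.Vg γ3) :
    A.Y 0 (A.Y 0 u v) w
      + (β γ1 γ2 * β γ1 γ3) • A.Y 0 (A.Y 0 v w) u
      + (β γ1 γ2 * β γ1 γ3 * β γ2 γ3 * β γ2 γ1) • A.Y 0 (A.Y 0 w u) v
      ∈ C2 A := by
  have hvw : A.Y 0 v w ∈ A.Vg (γ2 + γ3) := grading0 A γ2 γ3 v w hv hw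
  have hwu : A.Y 0 w u ∈ A.Vg (γ3 + γ1) := grading0 A γ3 γ1 w u hw hu
  have hC := commF A 0 γ1 γ2 u v hu hv w
  have s1 : A.Y 0 u (A.Y 0 v w) + β γ1 (γ2+γ3) • A.Y 0 (A.Y 0 v w) u ∈ C2 A :=
    skew A γ1 (γ2+γ3) u _ hu hvw
  have s2 : A.Y 0 v (A.Y 0 w u) + β γ2 (γ3+γ1) • A.Y 0 (A.Y 0 w u) v ∈ C2 A :=
    skew A γ2 (γ3+γ1) v _ hv hwu
  have s3 : A.Y 0 u w + β γ1 γ3 • A.Y 0 w u ∈ C2 A := skew A γ1 γ3 u w hu hw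
  have m1 : A.Y 0 v (A.Y 0 u w) + β γ1 γ3 • A.Y 0 v (A.Y 0 w u) ∈ C2 A := by
    have := C2_Y0_right A v s3
    simpa [map_add, map_smul] using this
  have hb1 : β γ1 γ2 * β γ1 γ3 = β γ1 (γ2+γ3) := hβmul γ1 γ2 γ3
  have hb2 : β γ2 γ3 * β γ2 γ1 = β γ2 (γ3+γ1) := hβmul γ2 γ3 γ1
  have key : A.Y 0 (A.Y 0 u v) w
      + (β γ1 γ2 * β γ1 γ3) • A.Y 0 (A.Y 0 v w) u
      + (β γ1 γ2 * β γ1 γ3 * β γ2 γ3 * β γ2 γ1) • A.Y 0 (A.Y 0 w u) v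
      = (A.Y 0 u (A.Y 0 v w) + β γ1 (γ2+γ3) • A.Y 0 (A.Y 0 v w) u)
        + (β γ1 (γ2+γ3)) •
            (A.Y 0 v (A.Y 0 w u) + β γ2 (γ3+γ1) • A.Y 0 (A.Y 0 w u) v)
        - (β γ1 γ2) •
            (A.Y 0 v (A.Y 0 u w) + β γ1 γ3 • A.Y 0 v (A.Y 0 w u)) := by
    rw [← hC, ← hb1, ← hb2]
    module
  rw [key]
  exact sub_mem (add_mem s1 (Submodule.smul_mem _ _ s2)) (Submodule.smul_mem _ _ m1)

/-- Part (iv). -/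
lemma part4 (γ1 γ2 γ3 : Γ) (u v w : V)
    (hu : u ∈ A.Vg γ1) (hv : v ∈ A.Vg γ2) (hw : w ∈ A.Vg γ3) :
    A.Y 0 u (A.Y (-1) v w) - A.Y (-1) (A.Y 0 u v) w
      + (β γ1 γ2 * β γ1 γ3) • A.Y (-1) v (A.Y 0 w u) ∈ C2 A := by
  have hC := commF A (-1) γ1 γ2 u v hu hv w
  have s3 : A.Y 0 u w + β γ1 γ3 • A.Y 0 w u ∈ C2 A := skew A γ1 γ3 u w hu hw
  have m : A.Y (-1) v (A.Y 0 u w) + β γ1 γ3 • A.Y (-1) v (A.Y 0 w u) ∈ C2 A := by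
    have := C2_Ym1_right A v s3
    simpa [map_add, map_smul] using this
  have key : A.Y 0 u (A.Y (-1) v w) - A.Y (-1) (A.Y 0 u v) w
      + (β γ1 γ2 * β γ1 γ3) • A.Y (-1) v (A.Y 0 w u)
      = (β γ1 γ2) • (A.Y (-1) v (A.Y 0 u w) + β γ1 γ3 • A.Y (-1) v (A.Y 0 w u)) := by
    rw [← hC]
    module
  rw [key]
  exact Submodule.smul_mem _ _ m

lemma mk_out (x : V ⧸ C2 A) : Submodule.Quotient.mk x.out = x :=
  Quotient.out_eq x

/-- lift of `Y n` to the quotient, as a plain function. -/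
noncomputable def qlift (n : ℤ)
    (hl : ∀ (w : V) (c : V), c ∈ C2 A → A.Y n c w ∈ C2 A)
    (hr : ∀ (u : V) (c : V), c ∈ C2 A → A.Y n u c ∈ C2 A) :
    (V ⧸ C2 A) → (V ⧸ C2 A) → (V ⧸ C2 A) :=
  fun a b => Submodule.Quotient.mk (A.Y n a.out b.out)

lemma qlift_mk (n : ℤ)
    (hl : ∀ (w : V) (c : V), c ∈ C2 A → A.Y n c w ∈ C2 A)
    (hr : ∀ (u : V) (c : V), c ∈ C2 A → A.Y n u c ∈ C2 A) (u v : V) :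
    qlift A n hl hr (Submodule.Quotient.mk u) (Submodule.Quotient.mk v)
      = Submodule.Quotient.mk (A.Y n u v) := by
  set a := (Submodule.Quotient.mk (p := C2 A) u).out with ha
  set b := (Submodule.Quotient.mk (p := C2 A) v).out with hb
  have hau : a - u ∈ C2 A := (Submodule.Quotient.eq _).mp (by rw [ha, mk_out])
  have hbv : b - v ∈ C2 A := (Submodule.Quotient.eq _).mp (by rw [hb, mk_out])
  show Submodule.Quotient.mk (A.Y n a b) = _
  rw [Submodule.Quotient.eq]
  have hsplit : A.Y n a b - A.Y n u v = A.Y n (a - u) b + A.Y n u (b - v) := by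
    simp only [map_sub, LinearMap.sub_apply]
    abel
  rw [hsplit]
  exact add_mem (hl b _ hau) (hr u _ hbv)

end Fin

end AuxHelpers

/-- assume `β(γ1,γ2)·β(γ1,γ3) = β(γ1,γ2+γ3)`.  Then for a
`(G_Γ, β, γ0)`-vertex algebra `V`:
(i) `Y_0(u, Y_{-2}(v,w)) ∈ C₂(V)` and `Y_0(Y_{-2}(u,v), w) ∈ C₂(V)`;
(ii) `Y_0(u,v) + β(γ1,γ2) • Y_0(v,u) ∈ C₂(V)` for homogeneous `u, v`;
(iii) the `β`-twisted Jacobi sum of `Y_0` lies in `C₂(V)`;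
(iv) `Y_0(u, Y_{-1}(v,w)) - Y_{-1}(Y_0(u,v), w)
      + β(γ1,γ2)β(γ1,γ3) • Y_{-1}(v, Y_0(w,u)) ∈ C₂(V)`.
Consequently `R(V) = V/C₂(V)`, with product induced by `Y_{-1}`, unit the
class of `𝟙` and bracket induced by `Y_0`, is a `β`-commutative
`(G_Γ, β)`-Poisson algebra of degree `0`. -/
theorem statement12 {k Γ V : Type*} [Field k] [CharZero k] [AddCommGroup Γ]
    [DecidableEq Γ] [AddCommGroup V] [Module k V]
    (γ0 : Γ) (β : Γ → Γ → k) (A : VA k Γ γ0 β V)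
    (hβmul : ∀ γ1 γ2 γ3 : Γ, β γ1 γ2 * β γ1 γ3 = β γ1 (γ2 + γ3)) :
    (∀ u v w : V,
      A.Y 0 u (A.Y (-2) v w) ∈ C2 A ∧ A.Y 0 (A.Y (-2) u v) w ∈ C2 A) ∧
    (∀ (γ1 γ2 : Γ) (u v : V), u ∈ A.Vg γ1 → v ∈ A.Vg γ2 →
      A.Y 0 u v + β γ1 γ2 • A.Y 0 v u ∈ C2 A) ∧
    (∀ (γ1 γ2 γ3 : Γ) (u v w : V),
      u ∈ A.Vg γ1 → v ∈ A.Vg γ2 → w ∈ A.Vg γ3 →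
      A.Y 0 (A.Y 0 u v) w
        + (β γ1 γ2 * β γ1 γ3) • A.Y 0 (A.Y 0 v w) u
        + (β γ1 γ2 * β γ1 γ3 * β γ2 γ3 * β γ2 γ1) • A.Y 0 (A.Y 0 w u) v
        ∈ C2 A) ∧
    (∀ (γ1 γ2 γ3 : Γ) (u v w : V),
      u ∈ A.Vg γ1 → v ∈ A.Vg γ2 → w ∈ A.Vg γ3 →
      A.Y 0 u (A.Y (-1) v w) - A.Y (-1) (A.Y 0 u v) w
        + (β γ1 γ2 * β γ1 γ3) • A.Y (-1) v (A.Y 0 w u) ∈ C2 A) ∧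
    (∃ (π π0 : (V ⧸ C2 A) → (V ⧸ C2 A) → (V ⧸ C2 A)),
      (∀ u v : V, π (Submodule.Quotient.mk u) (Submodule.Quotient.mk v)
          = Submodule.Quotient.mk (A.Y (-1) u v)) ∧
      (∀ u v : V, π0 (Submodule.Quotient.mk u) (Submodule.Quotient.mk v)
          = Submodule.Quotient.mk (A.Y 0 u v)) ∧
      -- `R(V)` is a unital associative `β`-commutative algebra
      (∀ a b c : V ⧸ C2 A, π (π a b) c = π a (π b c)) ∧
      (∀ a : V ⧸ C2 A, π (Submodule.Quotient.mk A.vac) a = a ∧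
          π a (Submodule.Quotient.mk A.vac) = a) ∧
      (∀ (γ1 γ2 : Γ) (u v : V), u ∈ A.Vg γ1 → v ∈ A.Vg γ2 →
        π (Submodule.Quotient.mk u) (Submodule.Quotient.mk v)
          = β γ1 γ2 • π (Submodule.Quotient.mk v) (Submodule.Quotient.mk u)) ∧
      -- `π0` is a `(G_Γ, β)`-Lie bracket of degree `0`
      (∀ (γ1 γ2 : Γ) (u v : V), u ∈ A.Vg γ1 → v ∈ A.Vg γ2 →
        π0 (Submodule.Quotient.mk u) (Submodule.Quotient.mk v)
          + β γ1 γ2 • π0 (Submodule.Quotient.mk v) (Submodule.Quotient.mk u)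
          = 0) ∧
      (∀ (γ1 γ2 γ3 : Γ) (u v w : V),
        u ∈ A.Vg γ1 → v ∈ A.Vg γ2 → w ∈ A.Vg γ3 →
        π0 (π0 (Submodule.Quotient.mk u) (Submodule.Quotient.mk v))
            (Submodule.Quotient.mk w)
          + (β γ1 γ2 * β γ1 γ3) •
              π0 (π0 (Submodule.Quotient.mk v) (Submodule.Quotient.mk w))
                (Submodule.Quotient.mk u)
          + (β γ1 γ2 * β γ1 γ3 * β γ2 γ3 * β γ2 γ1) •
              π0 (π0 (Submodule.Quotient.mk w) (Submodule.Quotient.mk u))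
                (Submodule.Quotient.mk v)
          = 0) ∧
      -- Leibniz rule: `ϖ0∘(id⊗ϖ) = ϖ∘(ϖ0⊗id) − ϖ∘(id⊗ϖ0)∘ξ^β`
      (∀ (γ1 γ2 γ3 : Γ) (u v w : V),
        u ∈ A.Vg γ1 → v ∈ A.Vg γ2 → w ∈ A.Vg γ3 →
        π0 (Submodule.Quotient.mk u)
            (π (Submodule.Quotient.mk v) (Submodule.Quotient.mk w))
          = π (π0 (Submodule.Quotient.mk u) (Submodule.Quotient.mk v))
              (Submodule.Quotient.mk w)
            - (β γ1 γ2 * β γ1 γ3) •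
                π (Submodule.Quotient.mk v)
                  (π0 (Submodule.Quotient.mk w) (Submodule.Quotient.mk u)))) := by
  constructor
  · exact fun u v w => ⟨Y0_C2_right A u v w, Y0_C2_left A u v w⟩
  constructor
  · exact fun γ1 γ2 u v hu hv => skew A γ1 γ2 u v hu hv
  constructor
  · exact fun γ1 γ2 γ3 u v w hu hv hw => part3 A hβmul γ1 γ2 γ3 u v w hu hv hw
  constructor
  · exact fun γ1 γ2 γ3 u v w hu hv hw => part4 A γ1 γ2 γ3 u v w hu hv hw
  refine ⟨qlift A (-1) (fun w c hc => C2_Ym1_left A w hc)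
            (fun u c hc => C2_Ym1_right A u hc),
          qlift A 0 (fun w c hc => C2_Y0_left A w hc)
            (fun u c hc => C2_Y0_right A u hc),
          fun u v => qlift_mk A (-1) _ _ u v,
          fun u v => qlift_mk A 0 _ _ u v, ?_, ?_, ?_, ?_, ?_, ?_⟩
  · -- associativity
    intro a b c
    obtain ⟨u, rfl⟩ := Submodule.Quotient.mk_surjective _ a
    obtain ⟨v, rfl⟩ := Submodule.Quotient.mk_surjective _ b
    obtain ⟨w, rfl⟩ := Submodule.Quotient.mk_surjective _ c
    simp only [qlift_mk]
    rw [Submodule.Quotient.eq]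
    simpa [neg_sub] using neg_mem (assoc_m1 A u v w)
  · -- unit
    intro a
    obtain ⟨u, rfl⟩ := Submodule.Quotient.mk_surjective _ a
    constructor
    · simp only [qlift_mk]; rw [A.vacuum_left]
    · simp only [qlift_mk]; rw [A.creation]
  · -- β-commutativity of the product
    intro γ1 γ2 u v hu hv
    simp only [qlift_mk]
    rw [← Submodule.Quotient.mk_smul, Submodule.Quotient.eq]
    exact comm_m1 A γ1 γ2 u v hu hv
  · -- skew-symmetry of the bracket
    intro γ1 γ2 u v hu hv
    simp only [qlift_mk]
    rw [← Submodule.Quotient.mk_smul, ← Submodule.Quotient.mk_add,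
      Submodule.Quotient.mk_eq_zero]
    exact skew A γ1 γ2 u v hu hv
  · -- Jacobi identity for the bracket
    intro γ1 γ2 γ3 u v w hu hv hw
    simp only [qlift_mk]
    rw [← Submodule.Quotient.mk_smul, ← Submodule.Quotient.mk_smul,
      ← Submodule.Quotient.mk_add, ← Submodule.Quotient.mk_add,
      Submodule.Quotient.mk_eq_zero]
    exact part3 A hβmul γ1 γ2 γ3 u v w hu hv hw
  · -- Leibniz rule
    intro γ1 γ2 γ3 u v w hu hv hw
    simp only [qlift_mk]
    rw [← Submodule.Quotient.mk_smul, ← Submodule.Quotient.mk_sub,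
      Submodule.Quotient.eq]
    have h := part4 A γ1 γ2 γ3 u v w hu hv hw
    convert h using 1
    abel
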